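/- With stability defined by the Hilbert–Mumford numerical criterion: let H = m₁H₁ + … + m_jH_j be a degree-α form written as a product f₁^{m₁}·…·f_j^{m_j} of irreducible forms f_i of degree d_i. If there exist rational numbers α_i with Σ m_iα_i < α/(n+1) (resp. ≤) and, for every one-parameter subgroup λ, ω(f_i,λ)/A_λ ≤ α_i, then H is GIT stable (resp. semistable). -/

import Mathlib

open MvPolynomial

/-- The linear weight of an exponent vector: w(I) = Σ_l c_l · i_l. -/
def wt {n : ℕ} (c : Fin n → ℤ) (I : Fin n →₀ ℕ) : ℤ := ∑ l, c l * (I l : ℤ)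

/-- ω(f) = min of w over exponent vectors of monomials with nonzero coefficient
(junk value 0 for f = 0). -/
noncomputable def omega {K : Type*} [CommSemiring K] {n : ℕ} (c : Fin n → ℤ)
    (f : MvPolynomial (Fin n) K) : ℤ :=
  ((f.support.image (wt c)).min).untopD 0

/-- ω of a linear system given by generators f: the minimum of Σ_j w(I_j) over tuples of
exponent vectors whose Plücker coordinate (coefficient determinant) is nonzero. -/
noncomputable def omegaW {K : Type*} [CommRing K] {n : ℕ} {ι : Type*} [Fintype ι]
    [DecidableEq ι] (c : Fin n → ℤ) (f : ι → MvPolynomial (Fin n) K) : ℤ :=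
  sInf { s : ℤ | ∃ I : ι → (Fin n →₀ ℕ),
    (Matrix.of fun j i => MvPolynomial.coeff (I i) (f j)).det ≠ 0 ∧ s = ∑ j, wt c (I j) }


/-- A normalized one-parameter subgroup of SL(n+1): integer weights
a₀ ≥ a₁ ≥ ... ≥ aₙ with Σ aₗ = 0 and a₀ > 0. -/
def Normalized {n : ℕ} (a : Fin (n+1) → ℤ) : Prop :=
  Antitone a ∧ (∑ l, a l) = 0 ∧ 0 < a 0

/-- The normalization factor A_λ = Σ_{l=0}^{n-1} (a_l - a_n). -/
def Aof {n : ℕ} (a : Fin (n+1) → ℤ) : ℤ :=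
  ∑ l : Fin n, (a l.castSucc - a (Fin.last n))

/-- The shifted weights a_l - a_n used in the tilde weights. -/
def cOf {n : ℕ} (a : Fin (n+1) → ℤ) : Fin (n+1) → ℤ :=
  fun l => a l - a (Fin.last n)

/-- A degree-e form g in n+1 variables is GIT stable iff ω(g,λ)/A_λ < e/(n+1) for every
normalized one-parameter subgroup λ. -/
def FormStable {K : Type*} [CommSemiring K] (n : ℕ) (e : ℚ)
    (g : MvPolynomial (Fin (n+1)) K) : Prop :=
  ∀ a : Fin (n+1) → ℤ, Normalized a →
    (omega (cOf a) g : ℚ) / (Aof a : ℚ) < e / (n + 1)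

/-- A degree-e form g in n+1 variables is GIT semistable iff ω(g,λ)/A_λ ≤ e/(n+1) for every
normalized one-parameter subgroup λ. -/
def FormSemistable {K : Type*} [CommSemiring K] (n : ℕ) (e : ℚ)
    (g : MvPolynomial (Fin (n+1)) K) : Prop :=
  ∀ a : Fin (n+1) → ℤ, Normalized a →
    (omega (cOf a) g : ℚ) / (Aof a : ℚ) ≤ e / (n + 1)

/-!
Over a domain, `ω(·, λ)` turns products into sums: refine the weight lexicographically so that
it becomes injective; the key-minimal monomials of `f` and `g` then multiply to a monomial of
`f * g` that arises in only one way, so its coefficient is a nonzero product and it has weight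
`ω(f, λ) + ω(g, λ)`. Hence `ω(H, λ) = Σ mᵢ ω(fᵢ, λ) ≤ (Σ mᵢ αᵢ) A_λ`, and `A_λ > 0` for a
normalized `λ`, since `aₙ < 0` and `A_λ = -(n + 1) aₙ`.
-/

theorem uniqueAdd_of_key_le {M O : Type*} [Add M] [AddCommMonoid O] [LinearOrder O]
    [IsOrderedCancelAddMonoid O] (key : M → O) (hadd : ∀ u v, key (u + v) = key u + key v)
    (hinj : Function.Injective key) {A B : Finset M} {a₀ b₀ : M}
    (ha₀ : ∀ a ∈ A, key a₀ ≤ key a) (hb₀ : ∀ b ∈ B, key b₀ ≤ key b) :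
    UniqueAdd A B a₀ b₀ := by
  intro a b ha hb hab
  have hsum : key a + key b = key a₀ + key b₀ := by rw [← hadd, ← hadd, hab]
  have hka : key a = key a₀ := by
    refine le_antisymm ?_ (ha₀ a ha)
    by_contra! hlt
    exact (add_lt_add_of_lt_of_le hlt (hb₀ b hb)).ne' hsum
  have hkb : key b = key b₀ := by rw [hka] at hsum; exact add_left_cancel hsum
  exact ⟨hinj hka, hinj hkb⟩

section Omega

variable {K : Type*} [CommSemiring K] {N : ℕ} (c : Fin N → ℤ)

theorem wt_add (I J : Fin N →₀ ℕ) : wt c (I + J) = wt c I + wt c J := by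
  simp [wt, mul_add, Finset.sum_add_distrib]

noncomputable def wtLexKey (I : Fin N →₀ ℕ) : ℤ ×ₗ Lex (Fin N →₀ ℕ) :=
  toLex (wt c I, toLex I)

theorem wtLexKey_add (I J : Fin N →₀ ℕ) : wtLexKey c (I + J) = wtLexKey c I + wtLexKey c J := by
  simp only [wtLexKey, wt_add]; rfl

theorem wtLexKey_injective : Function.Injective (wtLexKey c) :=
  fun _ _ h => toLex.injective (congrArg (fun x => (ofLex x).2) h)

theorem wt_le_of_wtLexKey_le {I J : Fin N →₀ ℕ} (h : wtLexKey c I ≤ wtLexKey c J) :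
    wt c I ≤ wt c J := by
  rcases Prod.Lex.le_iff.mp h with h | h
  exacts [h.le, h.1.le]

variable {c} {f g : MvPolynomial (Fin N) K}

theorem omega_eq_min' (hf : f ≠ 0) :
    omega c f = (f.support.image (wt c)).min' ((support_nonempty.mpr hf).image _) := by
  rw [omega, ← Finset.coe_min' ((support_nonempty.mpr hf).image (wt c))]
  rfl

theorem omega_le_wt {I : Fin N →₀ ℕ} (hI : I ∈ f.support) : omega c f ≤ wt c I := by
  rw [omega_eq_min' (ne_zero_iff.mpr ⟨I, mem_support_iff.mp hI⟩)]
  exact Finset.min'_le _ _ (Finset.mem_image_of_mem _ hI)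

theorem le_omega (hf : f ≠ 0) {b : ℤ} (h : ∀ I ∈ f.support, b ≤ wt c I) : b ≤ omega c f := by
  rw [omega_eq_min' hf]
  refine Finset.le_min' _ _ _ fun y hy => ?_
  obtain ⟨I, hI, rfl⟩ := Finset.mem_image.mp hy
  exact h I hI

theorem exists_omega_eq_wtLexKey_min (hf : f ≠ 0) :
    ∃ I ∈ f.support, (∀ J ∈ f.support, wtLexKey c I ≤ wtLexKey c J) ∧ omega c f = wt c I := by
  obtain ⟨I, hI, hmin⟩ := Finset.exists_min_image f.support (wtLexKey c) (support_nonempty.mpr hf)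
  exact ⟨I, hI, hmin, le_antisymm (omega_le_wt hI)
    (le_omega hf fun J hJ => wt_le_of_wtLexKey_le c (hmin J hJ))⟩

theorem omega_mul [NoZeroDivisors K] (hf : f ≠ 0) (hg : g ≠ 0) :
    omega c (f * g) = omega c f + omega c g := by
  classical
  obtain ⟨I, hI, hImin, hfI⟩ := exists_omega_eq_wtLexKey_min (c := c) hf
  obtain ⟨J, hJ, hJmin, hgJ⟩ := exists_omega_eq_wtLexKey_min (c := c) hg
  have hcoeff : coeff (I + J) (f * g) = coeff I f * coeff J g :=
    AddMonoidAlgebra.coeff_mul_add_of_uniqueAdd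
      (uniqueAdd_of_key_le _ (wtLexKey_add c) (wtLexKey_injective c) hImin hJmin)
  have hIJ : I + J ∈ (f * g).support := by
    rw [mem_support_iff, hcoeff]
    exact mul_ne_zero (mem_support_iff.mp hI) (mem_support_iff.mp hJ)
  refine le_antisymm (hfI ▸ hgJ ▸ wt_add c I J ▸ omega_le_wt hIJ) ?_
  refine le_omega (ne_zero_iff.mpr ⟨_, mem_support_iff.mp hIJ⟩) fun R hR => ?_
  obtain ⟨I', hI', J', hJ', rfl⟩ := Finset.mem_add.mp (support_mul f g hR)
  rw [wt_add]
  exact add_le_add (omega_le_wt hI') (omega_le_wt hJ')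

theorem omega_one [Nontrivial K] : omega c (1 : MvPolynomial (Fin N) K) = 0 := by
  simp [omega, wt]

theorem omega_prod [Nontrivial K] [NoZeroDivisors K] {ι : Type*} (s : Finset ι)
    (F : ι → MvPolynomial (Fin N) K) (hF : ∀ i ∈ s, F i ≠ 0) :
    omega c (∏ i ∈ s, F i) = ∑ i ∈ s, omega c (F i) := by
  classical
  induction s using Finset.induction with
  | empty => simp [omega_one]
  | insert a s ha ih =>
    have hF' : ∀ i ∈ s, F i ≠ 0 := fun i hi => hF i (Finset.mem_insert_of_mem hi)
    rw [Finset.prod_insert ha, Finset.sum_insert ha,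
      omega_mul (hF a (Finset.mem_insert_self a s)) (Finset.prod_ne_zero_iff.mpr hF'), ih hF']

theorem omega_pow [Nontrivial K] [NoZeroDivisors K] (hf : f ≠ 0) (k : ℕ) :
    omega c (f ^ k) = k * omega c f := by
  simpa using omega_prod (c := c) (Finset.range k) (fun _ => f) fun _ _ => hf

end Omega

theorem Normalized.Aof_pos {n : ℕ} {a : Fin (n+1) → ℤ} (ha : Normalized a) : 0 < Aof a := by
  obtain ⟨hanti, hsum, hpos⟩ := ha
  have hlast : a (Fin.last n) < 0 := by
    by_contra! h
    have : (0 : ℤ) < ∑ l, a l :=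
      Finset.sum_pos' (fun l _ => h.trans (hanti (Fin.le_last l))) ⟨0, Finset.mem_univ 0, hpos⟩
    omega
  have hA : Aof a = ∑ l : Fin (n+1), (a l - a (Fin.last n)) := by
    simp [Aof, Fin.sum_univ_castSucc (f := fun l => a l - a (Fin.last n))]
  rw [hA, Finset.sum_sub_distrib, hsum]
  simp only [Finset.sum_const, Finset.card_univ, Fintype.card_fin, nsmul_eq_mul]
  push_cast
  nlinarith

theorem omega_prod_pow_div_le {K : Type*} [CommSemiring K] [Nontrivial K] [NoZeroDivisors K]
    {N : ℕ} {ι : Type*} [Fintype ι] (c : Fin N → ℤ) {A : ℚ} (hA : 0 < A)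
    (F : ι → MvPolynomial (Fin N) K) (hF : ∀ i, F i ≠ 0) (m : ι → ℕ) (β : ι → ℚ)
    (hβ : ∀ i, (omega c (F i) : ℚ) / A ≤ β i) :
    (omega c (∏ i, F i ^ m i) : ℚ) / A ≤ ∑ i, (m i : ℚ) * β i := by
  rw [omega_prod Finset.univ _ fun i _ => pow_ne_zero _ (hF i), div_le_iff₀ hA, Finset.sum_mul]
  push_cast
  refine Finset.sum_le_sum fun i _ => ?_
  rw [omega_pow (hF i), mul_assoc]
  push_cast
  exact mul_le_mul_of_nonneg_left ((div_le_iff₀ hA).mp (hβ i)) (Nat.cast_nonneg _)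

theorem stmt_10_general {K : Type*} [Field K] {n j : ℕ}
    (f : Fin j → MvPolynomial (Fin (n+1)) K) (m : Fin j → ℕ)
    (hirr : ∀ i, Irreducible (f i))
    (α : ℕ)
    (αr : Fin j → ℚ)
    (hbound : ∀ i (a : Fin (n+1) → ℤ), Normalized a →
      (omega (cOf a) (f i) : ℚ) / (Aof a : ℚ) ≤ αr i) :
    ((∑ i, (m i : ℚ) * αr i < (α : ℚ) / (n + 1)) →
      FormStable n (α : ℚ) (∏ i, f i ^ m i)) ∧
    ((∑ i, (m i : ℚ) * αr i ≤ (α : ℚ) / (n + 1)) →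
      FormSemistable n (α : ℚ) (∏ i, f i ^ m i)) := by
  have hH : ∀ a, Normalized a →
      (omega (cOf a) (∏ i, f i ^ m i) : ℚ) / (Aof a : ℚ) ≤ ∑ i, (m i : ℚ) * αr i :=
    fun a ha => omega_prod_pow_div_le (cOf a) (by exact_mod_cast ha.Aof_pos) f
      (fun i => (hirr i).ne_zero) m αr (hbound · a ha)
  exact ⟨fun hlt a ha => (hH a ha).trans_lt hlt, fun hle a ha => (hH a ha).trans hle⟩

/-- Partial stability criterion: if H = f₁^{m₁}⋯f_j^{m_j} has degree α, and there are
rationals α_i with Σ m_i α_i < α/(n+1) (resp. ≤) and ω(f_i,λ)/A_λ ≤ α_i for all λ,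
then H is GIT stable (resp. semistable). -/
theorem stmt_10 {K : Type*} [Field K] {n j : ℕ}
    (f : Fin j → MvPolynomial (Fin (n+1)) K) (d m : Fin j → ℕ)
    (hirr : ∀ i, Irreducible (f i)) (hhom : ∀ i, (f i).IsHomogeneous (d i))
    (α : ℕ) (hα : α = ∑ i, m i * d i)
    (αr : Fin j → ℚ)
    (hbound : ∀ i (a : Fin (n+1) → ℤ), Normalized a →
      (omega (cOf a) (f i) : ℚ) / (Aof a : ℚ) ≤ αr i) :
    ((∑ i, (m i : ℚ) * αr i < (α : ℚ) / (n + 1)) →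
      FormStable n (α : ℚ) (∏ i, f i ^ m i)) ∧
    ((∑ i, (m i : ℚ) * αr i ≤ (α : ℚ) / (n + 1)) →
      FormSemistable n (α : ℚ) (∏ i, f i ^ m i)) :=
  stmt_10_general f m hirr α αr hbound
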